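/- In a finite-horizon Markov decision process obtained by backward induction, there exists for each state an action achieving the maximal one-step-lookahead value; consequently there exists a deterministic (pure) Markovian policy that is optimal: its value at every state equals the supremum over all (possibly randomized, history-dependent) policies of the expected reachability probability of the target set. -/

import Mathlib

open scoped BigOperators Classical

/-- A finite Markov decision process with a reachability target set. -/
structure FinMDP where
  S : Type
  [finS : Fintype S]
  A : S → Type
  [finA : ∀ s, Fintype (A s)]
  [neA : ∀ s, Nonempty (A s)]
  P : (s : S) → A s → S → ℝ
  T : Set S

attribute [instance] FinMDP.finS FinMDP.finA FinMDP.neA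

/-- Backward-induction values: `val n s` is the optimal probability of
visiting `T` within `n` steps starting from `s`. -/
noncomputable def FinMDP.val (M : FinMDP) : ℕ → M.S → ℝ
  | 0, s => if s ∈ M.T then 1 else 0
  | n + 1, s => if s ∈ M.T then 1 else
      ⨆ a : M.A s, ∑ r, M.P s a r * M.val n r

/-- Value of a deterministic (pure) Markovian policy. -/
noncomputable def FinMDP.pureVal (M : FinMDP) (pol : ℕ → (s : M.S) → M.A s) :
    ℕ → M.S → ℝ
  | 0, s => if s ∈ M.T then 1 else 0
  | n + 1, s => if s ∈ M.T then 1 else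
      ∑ r, M.P s (pol (n + 1) s) r * M.pureVal pol n r

/-- Value of a general randomized, history-dependent policy. -/
noncomputable def FinMDP.genVal (M : FinMDP)
    (σ : List M.S → (s : M.S) → M.A s → ℝ) : ℕ → M.S → List M.S → ℝ
  | 0, s, _ => if s ∈ M.T then 1 else 0
  | n + 1, s, h => if s ∈ M.T then 1 else
      ∑ a : M.A s, σ h s a * ∑ r, M.P s a r * M.genVal σ n r (h ++ [s])

/-!
Action sets are finite, so every one-step-lookahead maximum is attained; choosing
a maximizing action at each stage gives a pure Markovian policy whose value obeys
the recursion defining `val`, hence equals it. A randomized history-dependent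
policy instead takes a probability-weighted average of the continuation values of
the actions; by induction on the horizon these are bounded by `val`, and an
average is bounded by the maximum.
-/

theorem sum_mul_le_ciSup_of_sum_eq_one {ι : Type*} [Fintype ι] (w f : ι → ℝ)
    (hw_nonneg : ∀ i, 0 ≤ w i) (hw_sum : ∑ i, w i = 1) :
    ∑ i, w i * f i ≤ ⨆ i, f i :=
  calc ∑ i, w i * f i ≤ ∑ i, w i * ⨆ j, f j :=
        Finset.sum_le_sum fun i _ =>
          mul_le_mul_of_nonneg_left (le_ciSup (Finite.bddAbove_range f) i) (hw_nonneg i)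
    _ = ⨆ j, f j := by rw [← Finset.sum_mul, hw_sum, one_mul]

namespace FinMDP

variable (M : FinMDP)

theorem exists_action_eq_iSup (n : ℕ) (s : M.S) :
    ∃ a : M.A s, ∑ r, M.P s a r * M.val n r = ⨆ b : M.A s, ∑ r, M.P s b r * M.val n r :=
  exists_eq_ciSup_of_finite

/-- At stage `n + 1` the policy has `n` steps left, so it maximizes against `val n`;
its action at stage `0` is never used. -/
noncomputable def greedyPolicy : ℕ → (s : M.S) → M.A s
  | 0, _ => Classical.arbitrary _
  | n + 1, s => (M.exists_action_eq_iSup n s).choose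

theorem pureVal_greedyPolicy (n : ℕ) (s : M.S) : M.pureVal M.greedyPolicy n s = M.val n s := by
  induction n generalizing s with
  | zero => rfl
  | succ n ih =>
    simp only [pureVal, val, ih]
    exact if_congr Iff.rfl rfl (M.exists_action_eq_iSup n s).choose_spec

theorem genVal_le_val (hP_nonneg : ∀ (s : M.S) (a : M.A s) (r : M.S), 0 ≤ M.P s a r)
    (σ : List M.S → (s : M.S) → M.A s → ℝ) (hσ_nonneg : ∀ h s a, 0 ≤ σ h s a)
    (hσ_sum : ∀ h s, ∑ a, σ h s a = 1) (n : ℕ) (s : M.S) (h : List M.S) :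
    M.genVal σ n s h ≤ M.val n s := by
  induction n generalizing s h with
  | zero => exact le_rfl
  | succ n ih =>
    simp only [genVal, val]
    split_ifs
    · rfl
    · calc ∑ a, σ h s a * ∑ r, M.P s a r * M.genVal σ n r (h ++ [s])
          ≤ ∑ a, σ h s a * ∑ r, M.P s a r * M.val n r :=
            Finset.sum_le_sum fun a _ => mul_le_mul_of_nonneg_left
              (Finset.sum_le_sum fun r _ =>
                mul_le_mul_of_nonneg_left (ih r (h ++ [s])) (hP_nonneg s a r))
              (hσ_nonneg h s a)
        _ ≤ ⨆ a, ∑ r, M.P s a r * M.val n r :=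
            sum_mul_le_ciSup_of_sum_eq_one _ _ (hσ_nonneg h s) (hσ_sum h s)

end FinMDP

theorem exists_optimal_pure_markovian_policy_general (M : FinMDP) (F : ℕ)
    (hPnn : ∀ (s : M.S) (a : M.A s) (r : M.S), 0 ≤ M.P s a r) :
    (∀ (n : ℕ) (s : M.S), ∃ a : M.A s,
        (∑ r, M.P s a r * M.val n r) =
          ⨆ b : M.A s, ∑ r, M.P s b r * M.val n r) ∧
    ∃ pol : ℕ → (s : M.S) → M.A s,
      (∀ n, n ≤ F → ∀ s, M.pureVal pol n s = M.val n s) ∧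
      (∀ σ : List M.S → (s : M.S) → M.A s → ℝ,
        (∀ h s a, 0 ≤ σ h s a) → (∀ h s, ∑ a, σ h s a = 1) →
        ∀ n, n ≤ F → ∀ s h, M.genVal σ n s h ≤ M.val n s) :=
  ⟨M.exists_action_eq_iSup, M.greedyPolicy, fun n _ s => M.pureVal_greedyPolicy n s,
    fun σ hσ_nonneg hσ_sum n _ => M.genVal_le_val hPnn σ hσ_nonneg hσ_sum n⟩

/-- in a finite-horizon MDP solved by backward induction, every
state admits an action achieving the maximal one-step-lookahead value, and
there is a deterministic Markovian policy that is optimal: its value equals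
the backward-induction value at every state, which dominates the value of
every (randomized, history-dependent) policy. -/
theorem exists_optimal_pure_markovian_policy (M : FinMDP) (F : ℕ)
    (hPnn : ∀ (s : M.S) (a : M.A s) (r : M.S), 0 ≤ M.P s a r)
    (hPsum : ∀ (s : M.S) (a : M.A s), ∑ r, M.P s a r = 1) :
    (∀ (n : ℕ) (s : M.S), ∃ a : M.A s,
        (∑ r, M.P s a r * M.val n r) =
          ⨆ b : M.A s, ∑ r, M.P s b r * M.val n r) ∧
    ∃ pol : ℕ → (s : M.S) → M.A s,
      (∀ n, n ≤ F → ∀ s, M.pureVal pol n s = M.val n s) ∧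
      (∀ σ : List M.S → (s : M.S) → M.A s → ℝ,
        (∀ h s a, 0 ≤ σ h s a) → (∀ h s, ∑ a, σ h s a = 1) →
        ∀ n, n ≤ F → ∀ s h, M.genVal σ n s h ≤ M.val n s) :=
  exists_optimal_pure_markovian_policy_general M F hPnn
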